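/- arXiv:2204.06717 — 5 statements merged into one kernel-verified Lean document; each statement's English description precedes it below -/
import Mathlib

section
/- Let $V:(0,1)\to\mathbb{R}$ be a bounded $C^2$ function satisfying $L_k V = 0$ on $(0,1)$, where $L_k V(r) = V''(r) + (\frac{d-2}{r} + \frac{m r^{m-1}}{\varepsilon + r^m}) V'(r) - \frac{k(k+d-3)}{r^2} V(r)$ with $d\geq 3$, $m\geq 2$, $\varepsilon>0$, $k\geq 1$, and suppose $V$ extends continuously to $r=1$. Then $|V(r)| \leq |V(1)| r^{\alpha_k}$ for all $r\in(0,1)$, where $\alpha_k = \frac{-(d+m-3)+\sqrt{(d+m-3)^2+4k(k+d-3)}}{2}$. -/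
/-!
For `τ > 0` the function `W r = τ r⁻¹ + A r^α`, with `A ≥ max (V 1) 0`, is a supersolution of
`L_k W ≤ 0` on `(0,1)`: indeed `L_k r^s = (s (s-1) + s (d - 2 + θ) - γ) r^(s-2)` with
`θ = m r^m / (ε + r^m) ∈ [0, m]` and `γ = k (k + d - 3)`, which is `≤ 0` for `s = -1` and for
the nonnegative root `s = α` of `s² + (d + m - 3) s = γ`. Since `V` is bounded, `V ≤ W` close to
`0` and at `1`, and the maximum principle (the zeroth order coefficient `-γ / r²` is negative)
gives `V ≤ W` in between. Letting `τ → 0` and applying the same argument to `-V` gives the bound.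
-/

open Set Filter Topology

theorem IsLocalMax.hasDerivAt_hasDerivAt_nonpos {f f' : ℝ → ℝ} {a f'' : ℝ} (h : IsLocalMax f a)
    (hf : ∀ᶠ x in 𝓝 a, HasDerivAt f (f' x) x) (hf' : HasDerivAt f' f'' a) : f'' ≤ 0 := by
  by_contra! hpos
  have hf'a : f' a = 0 := h.hasDerivAt_eq_zero hf.self_of_nhds
  have hslope : ∀ᶠ x in 𝓝[>] a, 0 < slope f' a x :=
    nhdsGT_le_nhdsNE a <| (hasDerivAt_iff_tendsto_slope.1 hf').eventually (lt_mem_nhds hpos)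
  obtain ⟨b, hab, hb⟩ := mem_nhdsGT_iff_exists_Ioc_subset.1
    (hslope.and ((hf.filter_mono nhdsWithin_le_nhds).and (h.filter_mono nhdsWithin_le_nhds)))
  have hcont : ContinuousOn f (Icc a b) := by
    intro x hx
    rcases eq_or_lt_of_le hx.1 with rfl | hax
    · exact hf.self_of_nhds.continuousAt.continuousWithinAt
    · exact (hb ⟨hax, hx.2⟩).2.1.continuousAt.continuousWithinAt
  obtain ⟨c, hc, hfc⟩ := exists_hasDerivAt_eq_slope f f' hab hcont
    fun x hx => (hb (Ioo_subset_Ioc_self hx)).2.1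
  have hf'c : 0 < f' c := pos_of_slope_pos hc.1 (hb (Ioo_subset_Ioc_self hc)).1 hf'a
  have hfb : f b ≤ f a := (hb ⟨hab, le_rfl⟩).2.2
  rw [hfc] at hf'c
  exact (div_nonpos_of_nonpos_of_nonneg (sub_nonpos.2 hfb) (sub_pos.2 hab).le).not_gt hf'c

theorem nonpos_of_subsolution {a b : ℝ} {u u' u'' p q : ℝ → ℝ} (hu : ContinuousOn u (Icc a b))
    (hu' : ∀ x ∈ Ioo a b, HasDerivAt u (u' x) x) (hu'' : ∀ x ∈ Ioo a b, HasDerivAt u' (u'' x) x)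
    (hq : ∀ x ∈ Ioo a b, 0 < q x) (hsub : ∀ x ∈ Ioo a b, 0 ≤ u'' x + p x * u' x - q x * u x)
    (ha : u a ≤ 0) (hb : u b ≤ 0) {x : ℝ} (hx : x ∈ Icc a b) : u x ≤ 0 := by
  obtain ⟨x₀, hx₀, hmax⟩ := isCompact_Icc.exists_isMaxOn ⟨x, hx⟩ hu
  refine (hmax hx).trans (not_lt.1 fun hpos => ?_)
  have hx₀' : x₀ ∈ Ioo a b :=
    ⟨hx₀.1.lt_of_ne (by rintro rfl; linarith), hx₀.2.lt_of_ne (by rintro rfl; linarith)⟩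
  have hloc : IsLocalMax u x₀ := hmax.isLocalMax (Icc_mem_nhds hx₀'.1 hx₀'.2)
  have h₁ : u' x₀ = 0 := hloc.hasDerivAt_eq_zero (hu' x₀ hx₀')
  have h₂ : u'' x₀ ≤ 0 := hloc.hasDerivAt_hasDerivAt_nonpos
    (eventually_of_mem (isOpen_Ioo.mem_nhds hx₀') hu') (hu'' x₀ hx₀')
  have h₃ := hsub x₀ hx₀'
  rw [h₁, mul_zero, add_zero] at h₃
  nlinarith [mul_pos (hq x₀ hx₀') hpos]

theorem nonneg_quadratic_root {b γ α : ℝ} (hγ : 0 ≤ γ) (hα : α = (-b + √(b ^ 2 + 4 * γ)) / 2) :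
    0 ≤ α ∧ α ^ 2 + b * α = γ := by
  have hsq : √(b ^ 2 + 4 * γ) ^ 2 = b ^ 2 + 4 * γ := Real.sq_sqrt (by positivity)
  have hb : b ≤ √(b ^ 2 + 4 * γ) := Real.le_sqrt_of_sq_le (by linarith)
  subst hα
  constructor
  · linarith
  · linear_combination hsq / 4

/-- `L_k` at radius `r` acting on the 2-jet `(f, f', f'')` of a function at `r`;
`γ` stands for `k (k + d - 3)`. -/
noncomputable def radialOp (d m ε γ r f f' f'' : ℝ) : ℝ :=
  f'' + ((d - 2) / r + m * r ^ (m - 1) / (ε + r ^ m)) * f' - γ / r ^ 2 * f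

section radialOp

variable {d m ε γ r : ℝ}

theorem radialOp_neg (f f' f'' : ℝ) :
    radialOp d m ε γ r (-f) (-f') (-f'') = -radialOp d m ε γ r f f' f'' := by
  unfold radialOp; ring

theorem radialOp_sub (f f' f'' g g' g'' : ℝ) :
    radialOp d m ε γ r (f - g) (f' - g') (f'' - g'') =
      radialOp d m ε γ r f f' f'' - radialOp d m ε γ r g g' g'' := by
  unfold radialOp; ring

theorem radialOp_mul_add_mul (a b f f' f'' g g' g'' : ℝ) :
    radialOp d m ε γ r (a * f + b * g) (a * f' + b * g') (a * f'' + b * g'') =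
      a * radialOp d m ε γ r f f' f'' + b * radialOp d m ε γ r g g' g'' := by
  unfold radialOp; ring

-- The exponents are written as `Real.hasDerivAt_rpow_const` produces them.
theorem radialOp_rpow (s : ℝ) (hr : 0 < r) :
    radialOp d m ε γ r (r ^ s) (s * r ^ (s - 1)) (s * ((s - 1) * r ^ (s - 1 - 1))) =
      (s * (s - 1) + s * (d - 2 + m * r ^ m / (ε + r ^ m)) - γ) * r ^ (s - 2) := by
  have e₁ : r ^ (s - 1) = r ^ (s - 2) * r := by
    rw [← Real.rpow_add_one hr.ne']; ring_nf
  have e₂ : r ^ s = r ^ (s - 2) * r ^ 2 := by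
    rw [← Real.rpow_natCast, ← Real.rpow_add hr]; norm_num
  have e₃ : r ^ (m - 1) = r ^ m / r := by rw [Real.rpow_sub_one hr.ne']
  rw [radialOp, show s - 1 - 1 = s - 2 by ring, e₁, e₂, e₃]
  field_simp

theorem radialOp_barrier_nonpos {α τ A : ℝ} (hd : 3 ≤ d) (hm : 0 ≤ m) (hε : 0 ≤ ε) (hγ : 1 ≤ γ)
    (hα : 0 ≤ α) (hαγ : α ^ 2 + (d + m - 3) * α = γ) (hτ : 0 ≤ τ) (hA : 0 ≤ A) (hr : 0 < r) :
    radialOp d m ε γ r (τ * r ^ (-1 : ℝ) + A * r ^ α)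
      (τ * (-1 * r ^ (-1 - 1 : ℝ)) + A * (α * r ^ (α - 1)))
      (τ * (-1 * ((-1 - 1) * r ^ (-1 - 1 - 1 : ℝ))) + A * (α * ((α - 1) * r ^ (α - 1 - 1)))) ≤
      0 := by
  set θ := m * r ^ m / (ε + r ^ m)
  have hθ₀ : 0 ≤ θ := by positivity
  have hθ₁ : θ ≤ m := by
    rw [div_le_iff₀ (by positivity)]; nlinarith [Real.rpow_pos_of_pos hr m]
  have h₁ : -1 * (-1 - 1) + -1 * (d - 2 + θ) - γ ≤ 0 := by linarith
  have h₂ : α * (α - 1) + α * (d - 2 + θ) - γ ≤ 0 := by nlinarith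
  rw [radialOp_mul_add_mul, radialOp_rpow _ hr, radialOp_rpow _ hr]
  exact add_nonpos
    (mul_nonpos_of_nonneg_of_nonpos hτ (mul_nonpos_of_nonpos_of_nonneg h₁ (by positivity)))
    (mul_nonpos_of_nonneg_of_nonpos hA (mul_nonpos_of_nonpos_of_nonneg h₂ (by positivity)))

theorem le_of_radialOp_le {a b : ℝ} (ha : 0 < a) (hγ : 0 < γ) {V V' V'' W W' W'' : ℝ → ℝ}
    (hV : ∀ x ∈ Ioo a b, HasDerivAt V (V' x) x) (hV' : ∀ x ∈ Ioo a b, HasDerivAt V' (V'' x) x)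
    (hW : ∀ x ∈ Ioo a b, HasDerivAt W (W' x) x) (hW' : ∀ x ∈ Ioo a b, HasDerivAt W' (W'' x) x)
    (hcV : ContinuousOn V (Icc a b)) (hcW : ContinuousOn W (Icc a b))
    (hL : ∀ x ∈ Ioo a b,
      radialOp d m ε γ x (W x) (W' x) (W'' x) ≤ radialOp d m ε γ x (V x) (V' x) (V'' x))
    (hVa : V a ≤ W a) (hVb : V b ≤ W b) {x : ℝ} (hx : x ∈ Icc a b) : V x ≤ W x := by
  refine sub_nonpos.1 <| nonpos_of_subsolution (u := fun x => V x - W x)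
    (p := fun x => (d - 2) / x + m * x ^ (m - 1) / (ε + x ^ m)) (q := fun x => γ / x ^ 2)
    (hcV.sub hcW) (fun x hx => (hV x hx).sub (hW x hx)) (fun x hx => (hV' x hx).sub (hW' x hx))
    (fun x hx => div_pos hγ (pow_pos (ha.trans hx.1) 2)) (fun x hx => ?_)
    (sub_nonpos.2 hVa) (sub_nonpos.2 hVb) hx
  change 0 ≤ radialOp d m ε γ x (V x - W x) (V' x - W' x) (V'' x - W'' x)
  rw [radialOp_sub]
  linarith [hL x hx]

theorem le_barrier_of_radialOp_nonneg {α A M : ℝ} (hd : 3 ≤ d) (hm : 0 ≤ m) (hε : 0 ≤ ε)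
    (hγ : 1 ≤ γ) (hα : 0 ≤ α) (hαγ : α ^ 2 + (d + m - 3) * α = γ) {V V' V'' : ℝ → ℝ}
    (hV : ∀ x ∈ Ioo 0 1, HasDerivAt V (V' x) x) (hV' : ∀ x ∈ Ioo 0 1, HasDerivAt V' (V'' x) x)
    (hL : ∀ x ∈ Ioo 0 1, 0 ≤ radialOp d m ε γ x (V x) (V' x) (V'' x))
    (hcont : ContinuousOn V (Ioc 0 1)) (hM : ∀ x ∈ Ioo 0 1, V x ≤ M) (hA : 0 ≤ A)
    (hV1 : V 1 ≤ A) {τ : ℝ} (hτ : 0 < τ) (hr : r ∈ Ioo 0 1) :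
    V r ≤ τ * r ^ (-1 : ℝ) + A * r ^ α := by
  set W : ℝ → ℝ := fun x => τ * x ^ (-1 : ℝ) + A * x ^ α
  set W' : ℝ → ℝ := fun x => τ * (-1 * x ^ (-1 - 1 : ℝ)) + A * (α * x ^ (α - 1))
  have hpow (s : ℝ) {x : ℝ} (hx : 0 < x) := Real.hasDerivAt_rpow_const (p := s) (Or.inl hx.ne')
  have hW {x : ℝ} (hx : 0 < x) : HasDerivAt W (W' x) x :=
    ((hpow _ hx).const_mul τ).add ((hpow _ hx).const_mul A)
  have hW' {x : ℝ} (hx : 0 < x) : HasDerivAt W'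
      (τ * (-1 * ((-1 - 1) * x ^ (-1 - 1 - 1 : ℝ))) + A * (α * ((α - 1) * x ^ (α - 1 - 1)))) x :=
    (((hpow _ hx).const_mul (-1)).const_mul τ).add (((hpow _ hx).const_mul α).const_mul A)
  set M' := max M 1
  -- below `δ` the term `τ / x` of `W` exceeds the bound `M'` of `V`
  set δ := min r (τ / M')
  have hM' : 0 < M' := lt_max_of_lt_right one_pos
  have hδ : 0 < δ := lt_min hr.1 (div_pos hτ hM')
  have hδr : δ ≤ r := min_le_left _ _
  have hVδ : V δ ≤ W δ := by
    have hδM' : M' ≤ τ * δ ^ (-1 : ℝ) := by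
      rw [Real.rpow_neg_one, ← div_eq_mul_inv, le_div_iff₀ hδ, mul_comm, ← le_div_iff₀ hM']
      exact min_le_right _ _
    have := hM δ ⟨hδ, hδr.trans_lt hr.2⟩
    have := mul_nonneg hA (Real.rpow_nonneg hδ.le α)
    linarith [le_max_left M 1]
  have hV1W : V 1 ≤ W 1 := by
    simp only [W, Real.one_rpow, mul_one]
    linarith
  have hsub {x : ℝ} (hx : x ∈ Ioo δ 1) : x ∈ Ioo 0 1 := ⟨hδ.trans hx.1, hx.2⟩
  exact le_of_radialOp_le hδ (by linarith) (fun x hx => hV x (hsub hx))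
    (fun x hx => hV' x (hsub hx)) (fun x hx => hW (hsub hx).1) (fun x hx => hW' (hsub hx).1)
    (hcont.mono fun x hx => ⟨hδ.trans_le hx.1, hx.2⟩)
    (fun x hx => (hW (hδ.trans_le hx.1)).continuousAt.continuousWithinAt)
    (fun x hx => (radialOp_barrier_nonpos hd hm hε hγ hα hαγ hτ.le hA (hsub hx).1).trans
      (hL x (hsub hx)))
    hVδ hV1W ⟨hδr, hr.2.le⟩

theorem le_mul_rpow_of_radialOp_nonneg {α A M : ℝ} (hd : 3 ≤ d) (hm : 0 ≤ m) (hε : 0 ≤ ε)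
    (hγ : 1 ≤ γ) (hα : 0 ≤ α) (hαγ : α ^ 2 + (d + m - 3) * α = γ) {V V' V'' : ℝ → ℝ}
    (hV : ∀ x ∈ Ioo 0 1, HasDerivAt V (V' x) x) (hV' : ∀ x ∈ Ioo 0 1, HasDerivAt V' (V'' x) x)
    (hL : ∀ x ∈ Ioo 0 1, 0 ≤ radialOp d m ε γ x (V x) (V' x) (V'' x))
    (hcont : ContinuousOn V (Ioc 0 1)) (hM : ∀ x ∈ Ioo 0 1, V x ≤ M) (hA : 0 ≤ A)
    (hV1 : V 1 ≤ A) (hr : r ∈ Ioo 0 1) : V r ≤ A * r ^ α := by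
  refine le_of_forall_pos_le_add fun η hη => ?_
  have := le_barrier_of_radialOp_nonneg hd hm hε hγ hα hαγ hV hV' hL hcont hM hA hV1
    (mul_pos hη hr.1) hr
  rwa [Real.rpow_neg_one, mul_assoc, mul_inv_cancel₀ hr.1.ne', mul_one, add_comm] at this

end radialOp

theorem stmt_8 (d : ℕ) (hd : 3 ≤ d) (m : ℝ) (hm : 2 ≤ m) (ε : ℝ) (hε : 0 < ε)
    (k : ℕ) (hk : 1 ≤ k) (αk : ℝ)
    (hαk : αk = (-((d : ℝ) + m - 3)
        + Real.sqrt (((d : ℝ) + m - 3) ^ 2 + 4 * ((k : ℝ) * ((k : ℝ) + (d : ℝ) - 3)))) / 2)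
    (V : ℝ → ℝ)
    (hV2 : ContDiffOn ℝ 2 V (Set.Ioo 0 1))
    (hVbdd : ∃ M : ℝ, ∀ r ∈ Set.Ioo (0 : ℝ) 1, |V r| ≤ M)
    (hVcont : ContinuousOn V (Set.Ioc 0 1))
    (hLV : ∀ r ∈ Set.Ioo (0 : ℝ) 1,
      deriv (deriv V) r
        + (((d : ℝ) - 2) / r + m * r ^ (m - 1) / (ε + r ^ m)) * deriv V r
        - (k : ℝ) * ((k : ℝ) + (d : ℝ) - 3) / r ^ 2 * V r = 0) :
    ∀ r ∈ Set.Ioo (0 : ℝ) 1, |V r| ≤ |V 1| * r ^ αk := by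
  have hd' : (3 : ℝ) ≤ d := by exact_mod_cast hd
  have hγ : 1 ≤ (k : ℝ) * (k + d - 3) := by
    have : (1 : ℝ) ≤ k := by exact_mod_cast hk
    nlinarith
  obtain ⟨hα, hαγ⟩ := nonneg_quadratic_root (by linarith) hαk
  obtain ⟨M, hM⟩ := hVbdd
  have hV : ∀ r ∈ Ioo (0 : ℝ) 1, HasDerivAt V (deriv V r) r := fun r hr =>
    ((hV2.differentiableOn two_ne_zero).differentiableAt (isOpen_Ioo.mem_nhds hr)).hasDerivAt
  have hV' : ∀ r ∈ Ioo (0 : ℝ) 1, HasDerivAt (deriv V) (deriv (deriv V) r) r := fun r hr =>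
    (((hV2.deriv_of_isOpen isOpen_Ioo (by norm_num)).differentiableOn one_ne_zero).differentiableAt
      (isOpen_Ioo.mem_nhds hr)).hasDerivAt
  intro r hr
  rw [abs_le]
  constructor
  · have := le_mul_rpow_of_radialOp_nonneg hd' (by linarith) hε.le hγ hα hαγ
      (V := fun x => -V x) (fun x hx => (hV x hx).neg) (fun x hx => (hV' x hx).neg)
      (fun x hx => by rw [radialOp_neg]; exact neg_nonneg.2 (hLV x hx).le) hVcont.neg
      (fun x hx => (neg_le_abs (V x)).trans (hM x hx)) (abs_nonneg _) (neg_le_abs _) hr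
    linarith
  · exact le_mul_rpow_of_radialOp_nonneg hd' (by linarith) hε.le hγ hα hαγ hV hV'
      (fun x hx => (hLV x hx).ge) hVcont (fun x hx => (le_abs_self (V x)).trans (hM x hx))
      (abs_nonneg _) (le_abs_self _) hr
end

section
/- Let $d\geq 3$, $m\geq 2$, $\varepsilon,\lambda_0 > 0$, and let $\alpha = \frac{-(d+m-3)+\sqrt{(d+m-3)^2+4(d-2)}}{2}$. For $\beta \in \mathbb{R}$ define $\underline{g}(r) = \lambda_0^{(\beta-\alpha)/m} r^\beta (\varepsilon + \lambda_0 r^m)^{(\alpha-\beta)/m}$ and $L g(r) = g''(r) + (\frac{d-2}{r} + \frac{m\lambda_0 r^{m-1}}{\varepsilon+\lambda_0 r^m}) g'(r) - \frac{d-2}{r^2} g(r)$. Then for $r \in (0,1)$, $L\underline{g}(r) = \lambda_0^{(\beta-\alpha)/m} r^{\beta-2}(\varepsilon+\lambda_0 r^m)^{(\alpha-\beta)/m}\, p(t)$ where $t = \frac{\lambda_0 r^m}{\varepsilon+\lambda_0 r^m}$ and $p(t) = (\beta-\alpha)^2 t^2 + [(\alpha-\beta)(d+m+2\beta-3)+m\beta]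 t + (d-2+\beta)(\beta-1)$. -/
set_option maxHeartbeats 1000000 in

theorem stmt_10 (d : ℕ) (hd : 3 ≤ d) (m : ℝ) (hm : 2 ≤ m) (ε lam : ℝ)
    (hε : 0 < ε) (hlam : 0 < lam) (α : ℝ)
    (hα : α = (-((d : ℝ) + m - 3) + Real.sqrt (((d : ℝ) + m - 3) ^ 2 + 4 * ((d : ℝ) - 2))) / 2)
    (β : ℝ)
    (g : ℝ → ℝ)
    (hg : g = fun r : ℝ => lam ^ ((β - α) / m) * r ^ β * (ε + lam * r ^ m) ^ ((α - β) / m))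
    (p : ℝ → ℝ)
    (hp : p = fun t : ℝ => (β - α) ^ 2 * t ^ 2
      + ((α - β) * ((d : ℝ) + m + 2 * β - 3) + m * β) * t
      + ((d : ℝ) - 2 + β) * (β - 1)) :
    ∀ r ∈ Set.Ioo (0 : ℝ) 1,
      deriv (deriv g) r
        + (((d : ℝ) - 2) / r + m * lam * r ^ (m - 1) / (ε + lam * r ^ m)) * deriv g r
        - ((d : ℝ) - 2) / r ^ 2 * g r
      = lam ^ ((β - α) / m) * r ^ (β - 2) * (ε + lam * r ^ m) ^ ((α - β) / m)
          * p (lam * r ^ m / (ε + lam * r ^ m)) := by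
  intro r hr
  obtain ⟨hr0, hr1⟩ := hr
  have hm0 : m ≠ 0 := by linarith
  set C : ℝ := lam ^ ((β - α) / m) with hC
  set γ : ℝ := (α - β) / m with hγ
  set u : ℝ → ℝ := fun s => ε + lam * s ^ m with hu_def
  have hupos : ∀ s : ℝ, 0 < s → 0 < u s := by
    intro s hs
    have : 0 < s ^ m := Real.rpow_pos_of_pos hs m
    simp only [hu_def]
    positivity
  -- first derivative
  have hder : ∀ s : ℝ, 0 < s → HasDerivAt g
      (C * (β * s ^ (β - 1) * (u s) ^ γ
        + s ^ β * (lam * (m * s ^ (m - 1)) * γ * (u s) ^ (γ - 1)))) s := by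
    intro s hs
    have h1 : HasDerivAt (fun x : ℝ => x ^ β) (β * s ^ (β - 1)) s :=
      Real.hasDerivAt_rpow_const (Or.inl hs.ne')
    have h2 : HasDerivAt (fun x : ℝ => x ^ m) (m * s ^ (m - 1)) s :=
      Real.hasDerivAt_rpow_const (Or.inl hs.ne')
    have hu' : HasDerivAt u (lam * (m * s ^ (m - 1))) s := (h2.const_mul lam).const_add ε
    have h3 : HasDerivAt (fun x : ℝ => (u x) ^ γ)
        (lam * (m * s ^ (m - 1)) * γ * (u s) ^ (γ - 1)) s :=
      hu'.rpow_const (Or.inl (hupos s hs).ne')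
    have hfun : g = fun x : ℝ => C * (x ^ β * (u x) ^ γ) := by
      rw [hg]; funext x; ring
    rw [hfun]
    exact (h1.mul h3).const_mul C
  have hd1 : deriv g r = C * (β * r ^ (β - 1) * (u r) ^ γ
      + r ^ β * (lam * (m * r ^ (m - 1)) * γ * (u r) ^ (γ - 1))) := (hder r hr0).deriv
  -- second derivative
  have hev : deriv g =ᶠ[nhds r] fun s => C * (β * s ^ (β - 1) * (u s) ^ γ
      + s ^ β * (lam * (m * s ^ (m - 1)) * γ * (u s) ^ (γ - 1))) :=
    Filter.eventuallyEq_of_mem (Ioi_mem_nhds hr0) (fun s hs => (hder s hs).deriv)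
  have h1 : HasDerivAt (fun x : ℝ => x ^ β) (β * r ^ (β - 1)) r :=
    Real.hasDerivAt_rpow_const (Or.inl hr0.ne')
  have h1' : HasDerivAt (fun x : ℝ => x ^ (β - 1)) ((β - 1) * r ^ (β - 1 - 1)) r :=
    Real.hasDerivAt_rpow_const (Or.inl hr0.ne')
  have h2 : HasDerivAt (fun x : ℝ => x ^ m) (m * r ^ (m - 1)) r :=
    Real.hasDerivAt_rpow_const (Or.inl hr0.ne')
  have h2' : HasDerivAt (fun x : ℝ => x ^ (m - 1)) ((m - 1) * r ^ (m - 1 - 1)) r :=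
    Real.hasDerivAt_rpow_const (Or.inl hr0.ne')
  have hu' : HasDerivAt u (lam * (m * r ^ (m - 1))) r := (h2.const_mul lam).const_add ε
  have h3 : HasDerivAt (fun x : ℝ => (u x) ^ γ)
      (lam * (m * r ^ (m - 1)) * γ * (u r) ^ (γ - 1)) r :=
    hu'.rpow_const (Or.inl (hupos r hr0).ne')
  have h3' : HasDerivAt (fun x : ℝ => (u x) ^ (γ - 1))
      (lam * (m * r ^ (m - 1)) * (γ - 1) * (u r) ^ (γ - 1 - 1)) r :=
    hu'.rpow_const (Or.inl (hupos r hr0).ne')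
  have hbig : HasDerivAt (fun s : ℝ => C * (β * s ^ (β - 1) * (u s) ^ γ
      + s ^ β * (lam * (m * s ^ (m - 1)) * γ * (u s) ^ (γ - 1))))
      (C * ((β * ((β - 1) * r ^ (β - 1 - 1)) * (u r) ^ γ
          + β * r ^ (β - 1) * (lam * (m * r ^ (m - 1)) * γ * (u r) ^ (γ - 1)))
        + (β * r ^ (β - 1) * (lam * (m * r ^ (m - 1)) * γ * (u r) ^ (γ - 1))
          + r ^ β * (lam * (m * ((m - 1) * r ^ (m - 1 - 1))) * γ * (u r) ^ (γ - 1)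
            + lam * (m * r ^ (m - 1)) * γ
              * (lam * (m * r ^ (m - 1)) * (γ - 1) * (u r) ^ (γ - 1 - 1)))))) r := by
    exact (((h1'.const_mul β).mul h3).add
      (h1.mul ((((h2'.const_mul m).const_mul lam).mul_const γ).mul
        (hu'.rpow_const (Or.inl (hupos r hr0).ne') : HasDerivAt (fun x : ℝ => (u x) ^ (γ - 1)) _ r)))).const_mul C
  have hd2 : deriv (deriv g) r = C * ((β * ((β - 1) * r ^ (β - 1 - 1)) * (u r) ^ γ
          + β * r ^ (β - 1) * (lam * (m * r ^ (m - 1)) * γ * (u r) ^ (γ - 1)))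
        + (β * r ^ (β - 1) * (lam * (m * r ^ (m - 1)) * γ * (u r) ^ (γ - 1))
          + r ^ β * (lam * (m * ((m - 1) * r ^ (m - 1 - 1))) * γ * (u r) ^ (γ - 1)
            + lam * (m * r ^ (m - 1)) * γ
              * (lam * (m * r ^ (m - 1)) * (γ - 1) * (u r) ^ (γ - 1 - 1))))) := by
    rw [hev.deriv_eq]
    exact hbig.deriv
  have hupos' : (0:ℝ) < ε + lam * r ^ m := hupos r hr0
  have hune : (ε + lam * r ^ m) ≠ 0 := hupos'.ne'
  have hrne : r ≠ 0 := hr0.ne'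
  rw [hd1, hd2]
  simp only [hg, hp, hC, hγ, hu_def]
  simp only [Real.rpow_sub hr0, Real.rpow_sub hupos', Real.rpow_one, Real.rpow_two]
  field_simp
  ring
end

section
/- Let $d\geq 3$, $m\geq 2$, and $\alpha = \frac{-(d+m-3)+\sqrt{(d+m-3)^2+4(d-2)}}{2}$. Suppose $\beta \geq \frac{2\alpha^2+\alpha(d+m-3)}{2\alpha+d-3}$. Then the quadratic $p(t) = (\beta-\alpha)^2 t^2 + [(\alpha-\beta)(d+m+2\beta-3)+m\beta]t + (d-2+\beta)(\beta-1)$ satisfies $p(1) = 0$ and $p(t) \geq 0$ for all $t \in [0,1]$. -/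
theorem stmt_11 (d : ℕ) (hd : 3 ≤ d) (m : ℝ) (hm : 2 ≤ m) (α : ℝ)
    (hα : α = (-((d : ℝ) + m - 3) + Real.sqrt (((d : ℝ) + m - 3) ^ 2 + 4 * ((d : ℝ) - 2))) / 2)
    (β : ℝ) (hβ : (2 * α ^ 2 + α * ((d : ℝ) + m - 3)) / (2 * α + (d : ℝ) - 3) ≤ β)
    (p : ℝ → ℝ)
    (hp : p = fun t : ℝ => (β - α) ^ 2 * t ^ 2
      + ((α - β) * ((d : ℝ) + m + 2 * β - 3) + m * β) * t
      + ((d : ℝ) - 2 + β) * (β - 1)) :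
    p 1 = 0 ∧ ∀ t ∈ Set.Icc (0 : ℝ) 1, 0 ≤ p t := by
  have hd3 : (3 : ℝ) ≤ (d : ℝ) := by exact_mod_cast hd
  set s : ℝ := (d : ℝ) + m - 3 with hs
  have hsnn : 0 ≤ s := by simp only [hs]; linarith
  have harg : 0 ≤ s ^ 2 + 4 * ((d : ℝ) - 2) := by nlinarith
  have hsq : Real.sqrt (s ^ 2 + 4 * ((d : ℝ) - 2)) ^ 2 = s ^ 2 + 4 * ((d : ℝ) - 2) :=
    Real.sq_sqrt harg
  have h2α : 2 * α + s = Real.sqrt (s ^ 2 + 4 * ((d : ℝ) - 2)) := by rw [hα]; ring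
  have hsq2 : (2 * α + s) ^ 2 = s ^ 2 + 4 * ((d : ℝ) - 2) := by rw [h2α, hsq]
  have key : α ^ 2 + s * α = (d : ℝ) - 2 := by nlinarith [hsq2]
  have hαpos : 0 < α := by
    have hlt : s < Real.sqrt (s ^ 2 + 4 * ((d : ℝ) - 2)) := by
      rw [Real.lt_sqrt hsnn]; nlinarith
    linarith [h2α]
  have hden : 0 < 2 * α + (d : ℝ) - 3 := by linarith
  have hQ : 2 * α ^ 2 + α * s ≤ β * (2 * α + (d : ℝ) - 3) := by
    have := (div_le_iff₀ hden).mp hβ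
    linarith
  subst hp
  constructor
  · simp only
    nlinarith [key]
  · rintro t ⟨ht0, ht1⟩
    simp only
    have hslope : (β - α) ^ 2 * (t + 1) + ((α - β) * ((d : ℝ) + m + 2 * β - 3) + m * β) ≤ 0 := by
      nlinarith [sq_nonneg (β - α), hQ]
    have hfin : 0 ≤ (1 - t) *
        (-((β - α) ^ 2 * (t + 1) + ((α - β) * ((d : ℝ) + m + 2 * β - 3) + m * β))) :=
      mul_nonneg (by linarith) (by linarith)
    nlinarith [hfin, key]
end

section
/- Let $d\geq 3$, $m\geq 2$, $\lambda_0 = 2/m$, $\varepsilon > 0$, and fix $a_0 > 0$, $1 < b_0 < m+1$. Set $r_0(\varepsilon) = \left(\frac{a_0(b_0-1)(d+b_0-2)}{m\lambda_0(1+a_0 b_0)}\varepsilon\right)^{1/(m+1-b_0)}$ and let $\overline{g}(r) = C_0(r - a_0 r^{b_0})$ for any constant $C_0 > 0$. Then for all $r \in (0, r_0(\varepsilon))$ with $r_0(\varepsilon) \le 1$, $L\overline{g}(r) = C_0\left(-a_0(b_0-1)(b_0+d-2)r^{b_0-2} + \frac{m\lambda_0 r^{m-1}}{\varepsilon+\lambda_0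 r^m}(1 - a_0 b_0 r^{b_0-1})\right) \leq 0$, where $L g(r) = g''(r) + (\frac{d-2}{r} + \frac{m\lambda_0 r^{m-1}}{\varepsilon+\lambda_0 r^m}) g'(r) - \frac{d-2}{r^2} g(r)$. -/
set_option maxHeartbeats 1000000 in
theorem stmt_12 (d : ℕ) (hd : 3 ≤ d) (m : ℝ) (hm : 2 ≤ m) (lam : ℝ) (hlam : lam = 2 / m)
    (ε : ℝ) (hε : 0 < ε) (a₀ b₀ : ℝ) (ha₀ : 0 < a₀) (hb₀ : 1 < b₀) (hb₀' : b₀ < m + 1)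
    (r₀ : ℝ)
    (hr₀ : r₀ = (a₀ * (b₀ - 1) * ((d : ℝ) + b₀ - 2) / (m * lam * (1 + a₀ * b₀)) * ε)
      ^ (1 / (m + 1 - b₀)))
    (hr₀le : r₀ ≤ 1)
    (C₀ : ℝ) (hC₀ : 0 < C₀)
    (g : ℝ → ℝ) (hg : g = fun r : ℝ => C₀ * (r - a₀ * r ^ b₀)) :
    ∀ r ∈ Set.Ioo (0 : ℝ) r₀,
      deriv (deriv g) r
          + (((d : ℝ) - 2) / r + m * lam * r ^ (m - 1) / (ε + lam * r ^ m)) * deriv g r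
          - ((d : ℝ) - 2) / r ^ 2 * g r
        = C₀ * (-(a₀ * (b₀ - 1) * (b₀ + (d : ℝ) - 2)) * r ^ (b₀ - 2)
            + m * lam * r ^ (m - 1) / (ε + lam * r ^ m) * (1 - a₀ * b₀ * r ^ (b₀ - 1)))
      ∧ deriv (deriv g) r
          + (((d : ℝ) - 2) / r + m * lam * r ^ (m - 1) / (ε + lam * r ^ m)) * deriv g r
          - ((d : ℝ) - 2) / r ^ 2 * g r ≤ 0 := by
  have hm0 : (0:ℝ) < m := by linarith
  have hlam0 : (0:ℝ) < lam := by rw [hlam]; positivity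
  have hmlam : m * lam = 2 := by rw [hlam]; field_simp
  have hb₀0 : (0:ℝ) < b₀ := by linarith
  have hd3 : (3:ℝ) ≤ (d:ℝ) := by exact_mod_cast hd
  have hab : (0:ℝ) < 1 + a₀ * b₀ := by nlinarith [mul_pos ha₀ hb₀0]
  have hder1 : ∀ x : ℝ, 0 < x → HasDerivAt g (C₀ * (1 - a₀ * (b₀ * x ^ (b₀ - 1)))) x := by
    intro x hx
    rw [hg]
    exact ((hasDerivAt_id x).sub
      ((Real.hasDerivAt_rpow_const (Or.inl hx.ne')).const_mul a₀)).const_mul C₀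
  have hderiv1 : ∀ x : ℝ, 0 < x → deriv g x = C₀ * (1 - a₀ * (b₀ * x ^ (b₀ - 1))) :=
    fun x hx => (hder1 x hx).deriv
  intro r hr
  obtain ⟨hr0, hrr₀⟩ := hr
  have heq : deriv g =ᶠ[nhds r] fun x => C₀ * (1 - a₀ * (b₀ * x ^ (b₀ - 1))) := by
    filter_upwards [Ioi_mem_nhds hr0] with x hx
    exact hderiv1 x hx
  have hder2 : deriv (deriv g) r = C₀ * (0 - a₀ * (b₀ * ((b₀ - 1) * r ^ (b₀ - 2)))) := by
    rw [heq.deriv_eq]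
    have h : HasDerivAt (fun x : ℝ => x ^ (b₀ - 1)) ((b₀-1) * r ^ (b₀ - 1 - 1)) r :=
      Real.hasDerivAt_rpow_const (Or.inl hr0.ne')
    rw [show b₀ - 1 - 1 = b₀ - 2 by ring] at h
    exact (((hasDerivAt_const r (1:ℝ)).sub ((h.const_mul b₀).const_mul a₀)).const_mul C₀).deriv
  have hu1 : r ^ (b₀ - 1) = r ^ b₀ / r := by
    rw [Real.rpow_sub hr0, Real.rpow_one]
  have hu2 : r ^ (b₀ - 2) = r ^ b₀ / (r * r) := by
    rw [Real.rpow_sub hr0]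
    congr 1
    rw [show (2:ℝ) = ((2:ℕ):ℝ) by norm_num, Real.rpow_natCast]
    ring
  set K := m * lam * r ^ (m - 1) / (ε + lam * r ^ m) with hK
  have hEq : deriv (deriv g) r
          + (((d : ℝ) - 2) / r + K) * deriv g r
          - ((d : ℝ) - 2) / r ^ 2 * g r
        = C₀ * (-(a₀ * (b₀ - 1) * (b₀ + (d : ℝ) - 2)) * r ^ (b₀ - 2)
            + K * (1 - a₀ * b₀ * r ^ (b₀ - 1))) := by
    rw [hder2, hderiv1 r hr0, hg]
    simp only
    rw [hu1, hu2]
    field_simp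
    ring
  refine ⟨hEq, ?_⟩
  rw [hEq]
  have hrm : (0:ℝ) ≤ r ^ m := Real.rpow_nonneg hr0.le m
  have hrm1 : (0:ℝ) ≤ r ^ (m-1) := Real.rpow_nonneg hr0.le (m-1)
  have hden : (0:ℝ) < ε + lam * r ^ m := by nlinarith
  have hK0 : 0 ≤ K := by
    rw [hK]
    apply div_nonneg _ hden.le
    rw [hmlam]; linarith
  have hKle : K ≤ m * lam * r ^ (m - 1) / ε := by
    rw [hK]
    gcongr
    nlinarith
  have hrb1 : (0:ℝ) ≤ r ^ (b₀ - 1) := Real.rpow_nonneg hr0.le _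
  have hfac : 1 - a₀ * b₀ * r ^ (b₀ - 1) ≤ 1 + a₀ * b₀ := by
    nlinarith [mul_nonneg (mul_pos ha₀ hb₀0).le hrb1]
  have hA0 : (0:ℝ) < a₀ * (b₀ - 1) * (b₀ + (d:ℝ) - 2) :=
    mul_pos (mul_pos ha₀ (by linarith)) (by linarith)
  have hD0 : (0:ℝ) < m * lam * (1 + a₀ * b₀) := by rw [hmlam]; linarith
  have hQ0 : 0 < a₀ * (b₀ - 1) * ((d : ℝ) + b₀ - 2) / (m * lam * (1 + a₀ * b₀)) * ε :=
    mul_pos (div_pos (mul_pos (mul_pos ha₀ (by linarith)) (by linarith)) hD0) hε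
  have hp0 : 0 < m + 1 - b₀ := by linarith
  have hrpow : r ^ (m + 1 - b₀)
      ≤ a₀ * (b₀ - 1) * ((d : ℝ) + b₀ - 2) / (m * lam * (1 + a₀ * b₀)) * ε := by
    have h1 : r ^ (m + 1 - b₀) ≤ r₀ ^ (m + 1 - b₀) :=
      Real.rpow_le_rpow hr0.le hrr₀.le hp0.le
    have h2 : r₀ ^ (m + 1 - b₀)
        = a₀ * (b₀ - 1) * ((d : ℝ) + b₀ - 2) / (m * lam * (1 + a₀ * b₀)) * ε := by
      rw [hr₀, ← Real.rpow_mul hQ0.le, one_div, inv_mul_cancel₀ hp0.ne', Real.rpow_one]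
    linarith
  have hsplit : r ^ (m - 1) = r ^ (b₀ - 2) * r ^ (m + 1 - b₀) := by
    rw [← Real.rpow_add hr0]; ring_nf
  have hub : (0:ℝ) ≤ r ^ (b₀ - 2) := Real.rpow_nonneg hr0.le _
  have hQid : a₀ * (b₀ - 1) * ((d : ℝ) + b₀ - 2) / (m * lam * (1 + a₀ * b₀)) * ε
      * (m * lam * (1 + a₀ * b₀)) = a₀ * (b₀ - 1) * ((d : ℝ) + b₀ - 2) * ε := by
    field_simp
  have hmain : m * lam * r ^ (m - 1) / ε * (1 + a₀ * b₀)
      ≤ a₀ * (b₀ - 1) * (b₀ + (d:ℝ) - 2) * r ^ (b₀ - 2) := by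
    rw [hsplit, div_mul_eq_mul_div, div_le_iff₀ hε]
    have h5 : r ^ (b₀ - 2) * (m * lam * (1 + a₀ * b₀)) * r ^ (m + 1 - b₀)
        ≤ r ^ (b₀ - 2) * (m * lam * (1 + a₀ * b₀))
          * (a₀ * (b₀ - 1) * ((d : ℝ) + b₀ - 2) / (m * lam * (1 + a₀ * b₀)) * ε) :=
      mul_le_mul_of_nonneg_left hrpow (mul_nonneg hub hD0.le)
    calc m * lam * (r ^ (b₀ - 2) * r ^ (m + 1 - b₀)) * (1 + a₀ * b₀)
        = r ^ (b₀ - 2) * (m * lam * (1 + a₀ * b₀)) * r ^ (m + 1 - b₀) := by ring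
      _ ≤ r ^ (b₀ - 2) * (m * lam * (1 + a₀ * b₀))
          * (a₀ * (b₀ - 1) * ((d : ℝ) + b₀ - 2) / (m * lam * (1 + a₀ * b₀)) * ε) := h5
      _ = r ^ (b₀ - 2) * (a₀ * (b₀ - 1) * ((d : ℝ) + b₀ - 2) / (m * lam * (1 + a₀ * b₀)) * ε
          * (m * lam * (1 + a₀ * b₀))) := by ring
      _ = r ^ (b₀ - 2) * (a₀ * (b₀ - 1) * ((d : ℝ) + b₀ - 2) * ε) := by rw [hQid]
      _ = a₀ * (b₀ - 1) * (b₀ + (d:ℝ) - 2) * r ^ (b₀ - 2) * ε := by ring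
  have hchain : K * (1 - a₀ * b₀ * r ^ (b₀ - 1))
      ≤ a₀ * (b₀ - 1) * (b₀ + (d:ℝ) - 2) * r ^ (b₀ - 2) := by
    calc K * (1 - a₀ * b₀ * r ^ (b₀ - 1)) ≤ K * (1 + a₀ * b₀) :=
          mul_le_mul_of_nonneg_left hfac hK0
      _ ≤ m * lam * r ^ (m - 1) / ε * (1 + a₀ * b₀) :=
          mul_le_mul_of_nonneg_right hKle hab.le
      _ ≤ _ := hmain
  have hinner : -(a₀ * (b₀ - 1) * (b₀ + (d:ℝ) - 2)) * r ^ (b₀ - 2)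
      + K * (1 - a₀ * b₀ * r ^ (b₀ - 1)) ≤ 0 := by linarith
  exact mul_nonpos_iff.mpr (Or.inl ⟨hC₀.le, hinner⟩)
end

section
/- Let $d\geq 3$, $m\geq 2$, $\varepsilon,\lambda_0>0$, $\alpha = \frac{-(d+m-3)+\sqrt{(d+m-3)^2+4(d-2)}}{2}$, and let $L g(r) = g''(r) + (\frac{d-2}{r} + \frac{m\lambda_0 r^{m-1}}{\varepsilon+\lambda_0 r^m}) g'(r) - \frac{d-2}{r^2} g(r)$. Then $L(r^\alpha) < 0$ for all $r \in (0,1)$, i.e., $r^\alpha$ is a strict supersolution. -/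
/-! With `b = d + m - 3` and `c = d - 2`, the exponent `α` is the positive root of
`α² + bα = c`. Since `r^α` has derivatives `α r^(α-1)` and `α(α-1) r^(α-2)`, the operator gives
`L(r^α) = r^(α-2) (α² + (d-3)α - (d-2) + mα · λ₀rᵐ/(ε + λ₀rᵐ))`, and the quadratic turns the
bracket into `mα (λ₀rᵐ/(ε + λ₀rᵐ) - 1) = -mαε/(ε + λ₀rᵐ) < 0`. -/

open Real

noncomputable def radialOperator (d m ε lam : ℝ) (g : ℝ → ℝ) (r : ℝ) : ℝ :=
  deriv (deriv g) r + ((d - 2) / r + m * lam * r ^ (m - 1) / (ε + lam * r ^ m)) * deriv g r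
    - (d - 2) / r ^ 2 * g r

lemma quadratic_root_spec {b c α : ℝ} (hc : 0 ≤ c) (hα : α = (-b + √(b ^ 2 + 4 * c)) / 2) :
    α ^ 2 + b * α = c := by
  have hsq : √(b ^ 2 + 4 * c) ^ 2 = b ^ 2 + 4 * c := sq_sqrt (by positivity)
  rw [hα]
  linear_combination hsq / 4

lemma quadratic_root_pos {b c α : ℝ} (hc : 0 < c) (hα : α = (-b + √(b ^ 2 + 4 * c)) / 2) :
    0 < α := by
  have hb : b < √(b ^ 2 + 4 * c) :=
    calc b ≤ |b| := le_abs_self b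
      _ = √(b ^ 2) := (sqrt_sq_eq_abs b).symm
      _ < √(b ^ 2 + 4 * c) := sqrt_lt_sqrt (sq_nonneg b) (by linarith)
  rw [hα]
  linarith

lemma deriv_deriv_rpow_const (p : ℝ) :
    deriv (deriv fun s : ℝ => s ^ p) = fun s => p * (p - 1) * s ^ (p - 2) := by
  rw [deriv_rpow_const', deriv_const_mul_field', deriv_rpow_const']
  ext s
  rw [sub_sub, one_add_one_eq_two, mul_assoc]

lemma radialOperator_rpow {d m ε lam α r : ℝ} (hr : 0 < r) (hden : ε + lam * r ^ m ≠ 0) :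
    radialOperator d m ε lam (fun s => s ^ α) r
      = r ^ (α - 2) * (α ^ 2 + (d - 3) * α - (d - 2)
          + m * α * (lam * r ^ m / (ε + lam * r ^ m))) := by
  have hα1 : r ^ (α - 1) = r ^ (α - 2) * r := by
    rw [← rpow_add_one hr.ne']; ring_nf
  have hα0 : r ^ α = r ^ (α - 2) * r ^ 2 := by
    rw [← rpow_natCast, ← rpow_add hr]; norm_num
  have hm1 : r ^ (m - 1) = r ^ m * r⁻¹ := by
    rw [rpow_sub_one hr.ne', div_eq_mul_inv]
  rw [radialOperator, deriv_deriv_rpow_const, deriv_rpow_const']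
  beta_reduce
  rw [hα1, hα0, hm1]
  field_simp
  ring

lemma radialOperator_rpow_of_quadratic {d m ε lam α r : ℝ} (hr : 0 < r)
    (hden : ε + lam * r ^ m ≠ 0) (hα : α ^ 2 + (d + m - 3) * α = d - 2) :
    radialOperator d m ε lam (fun s => s ^ α) r
      = -(r ^ (α - 2) * (m * α * ε / (ε + lam * r ^ m))) := by
  rw [radialOperator_rpow hr hden]
  field_simp
  linear_combination (ε + lam * r ^ m) * hα

theorem stmt_14 (d : ℕ) (hd : 3 ≤ d) (m : ℝ) (hm : 2 ≤ m) (ε lam : ℝ)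
    (hε : 0 < ε) (hlam : 0 < lam) (α : ℝ)
    (hα : α = (-((d : ℝ) + m - 3) + Real.sqrt (((d : ℝ) + m - 3) ^ 2 + 4 * ((d : ℝ) - 2))) / 2) :
    ∀ r ∈ Set.Ioo (0 : ℝ) 1,
      deriv (deriv (fun s : ℝ => s ^ α)) r
        + (((d : ℝ) - 2) / r + m * lam * r ^ (m - 1) / (ε + lam * r ^ m))
          * deriv (fun s : ℝ => s ^ α) r
        - ((d : ℝ) - 2) / r ^ 2 * r ^ α < 0 := by
  rintro r ⟨hr, -⟩
  have hd' : (3 : ℝ) ≤ d := by exact_mod_cast hd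
  have hαpos : 0 < α := quadratic_root_pos (by linarith) hα
  have hden : 0 < ε + lam * r ^ m := by positivity
  have hL := radialOperator_rpow_of_quadratic hr hden.ne' (quadratic_root_spec (by linarith) hα)
  rw [radialOperator] at hL
  rw [hL, neg_lt_zero]
  have : 0 < m := by linarith
  positivity
end
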